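/- Let K : ℝ → ℝ be integrable with ∫K = 1, ∫uK(u)du = 0, ∫u²|K(u)|du < ∞, and with support contained in [−A, A] for some A > 0. Let f : ℝ → ℝ be differentiable with f' Lipschitz, and let g be a measurable function with f'(y) − f'(x) = ∫_x^y g(t) dt for all x, y. Fix x ∈ ℝ, h > 0, and a constant M ≥ 0 such that |g(y)| ≤ M for Lebesgue-almost every y ∈ [x − A h, x + A h]. Then | ∫_ℝ K(u)·f(x − h u) du − f(x) | ≤ (h²/2)·M·∫_ℝ u²·|K(u)| du. -/

import Mathlib

/-!
Because `∫ K = 1` and `∫ u K(u) du = 0`, the bias is `∫ K(u) R(x - h u) du`, where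
`R(y) = f y - f x - f' x (y - x)` is the first-order Taylor remainder of `f` at `x`. Only `u` in
the support of `K` matter, and for them `x - h u` lies in `[x - A h, x + A h]`. There `g` bounds
the increments of `f'`, `|f' t - f' x| ≤ M |t - x|`, and comparing `R` with `M (y - x)² / 2`
(whose derivative dominates `|R'|`) gives `|R(y)| ≤ M (y - x)² / 2`. Integrating against `|K|`
yields the bound.
-/

open MeasureTheory intervalIntegral Set

theorem abs_taylor_remainder_le_of_le {f f' : ℝ → ℝ} {M x y : ℝ} (hxy : x ≤ y)
    (hf : ∀ t ∈ Icc x y, HasDerivAt f (f' t) t)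
    (hbound : ∀ t ∈ Icc x y, |f' t - f' x| ≤ M * (t - x)) :
    |f y - f x - f' x * (y - x)| ≤ M / 2 * (y - x) ^ 2 := by
  have hremainder : ∀ t ∈ Icc x y,
      HasDerivAt (fun s => f s - f x - f' x * (s - x)) (f' t - f' x) t := fun t ht => by
    have := ((hf t ht).sub_const (f x)).sub (((hasDerivAt_id' t).sub_const x).const_mul (f' x))
    rwa [mul_one] at this
  have hquadratic : ∀ t, HasDerivAt (fun s => M / 2 * (s - x) ^ 2) (M * (t - x)) t := fun t =>
    ((((hasDerivAt_id' t).sub_const x).pow 2).const_mul (M / 2)).congr_deriv (by norm_num; ring)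
  exact image_norm_le_of_norm_deriv_right_le_deriv_boundary
    (fun t ht => (hremainder t ht).continuousAt.continuousWithinAt)
    (fun t ht => (hremainder t (Ico_subset_Icc_self ht)).hasDerivWithinAt)
    (by simp) hquadratic (fun t ht => hbound t (Ico_subset_Icc_self ht)) ⟨hxy, le_rfl⟩

theorem abs_taylor_remainder_le {f f' : ℝ → ℝ} {M x y : ℝ}
    (hf : ∀ t ∈ uIcc x y, HasDerivAt f (f' t) t)
    (hbound : ∀ t ∈ uIcc x y, |f' t - f' x| ≤ M * |t - x|) :
    |f y - f x - f' x * (y - x)| ≤ M / 2 * (y - x) ^ 2 := by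
  rcases le_total x y with hxy | hyx
  · rw [uIcc_of_le hxy] at hf hbound
    exact abs_taylor_remainder_le_of_le hxy hf fun t ht => by
      simpa [abs_of_nonneg (sub_nonneg.2 ht.1)] using hbound t ht
  · rw [uIcc_of_ge hyx] at hf hbound
    have hneg : ∀ t ∈ Icc (-x) (-y), -t ∈ Icc y x := fun t ht =>
      ⟨le_neg.1 ht.2, neg_le.1 ht.1⟩
    have hreflected := abs_taylor_remainder_le_of_le (f := fun t => f (-t))
      (f' := fun t => -f' (-t)) (M := M) (neg_le_neg hyx)
      (fun t ht => by
        have := (hf (-t) (hneg t ht)).comp t (hasDerivAt_neg' t)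
        rwa [mul_neg_one] at this)
      (fun t ht => calc
        |-f' (-t) - -f' (- -x)| = |f' (-t) - f' x| := by rw [neg_neg, neg_sub_neg, abs_sub_comm]
        _ ≤ M * |-t - x| := hbound (-t) (hneg t ht)
        _ = M * (t - -x) := by rw [abs_of_nonpos (by linarith [ht.1])]; ring)
    simp only [neg_neg] at hreflected
    convert hreflected using 2 <;> ring

theorem MeasureTheory.Integrable.id_mul_of_sq_mul_abs {K : ℝ → ℝ} (hK : Integrable K)
    (hK_mom2 : Integrable fun u => u ^ 2 * |K u|) : Integrable fun u => u * K u := by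
  refine (hK.abs.add hK_mom2).mono (aestronglyMeasurable_id.mul hK.aestronglyMeasurable)
    (Filter.Eventually.of_forall fun u => ?_)
  have hu : |u| ≤ 1 + u ^ 2 := by nlinarith [abs_nonneg u, sq_abs u, sq_nonneg (|u| - 1)]
  rw [Real.norm_eq_abs, Real.norm_eq_abs, abs_mul, Pi.add_apply,
    abs_of_nonneg (by positivity : 0 ≤ |K u| + u ^ 2 * |K u|)]
  nlinarith [abs_nonneg (K u)]

theorem abs_sub_le_of_sub_eq_integral {F g : ℝ → ℝ} {s : Set ℝ} [hs : s.OrdConnected]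
    {M : ℝ} (hrep : ∀ x y, F y - F x = ∫ t in x..y, g t)
    (hg : ∀ᵐ t, t ∈ s → |g t| ≤ M)
    {x y : ℝ} (hx : x ∈ s) (hy : y ∈ s) : |F y - F x| ≤ M * |y - x| := by
  rw [hrep, ← Real.norm_eq_abs]
  refine intervalIntegral.norm_integral_le_of_norm_le_const_ae ?_
  filter_upwards [hg] with t ht htxy
  exact ht (hs.uIoc_subset hx hy htxy)

theorem abs_integral_mul_sub_le_of_moments {K φ : ℝ → ℝ} {a b C : ℝ}
    (hK_int : Integrable K) (hK_norm : ∫ u, K u = 1) (hK_mean : ∫ u, u * K u = 0)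
    (hK_mom2 : Integrable fun u => u ^ 2 * |K u|) (hφ : AEStronglyMeasurable φ)
    (hrem : ∀ u, K u ≠ 0 → |φ u - a - b * u| ≤ C * u ^ 2) :
    |(∫ u, K u * φ u) - a| ≤ C * ∫ u, u ^ 2 * |K u| := by
  set R := fun u => K u * (φ u - a - b * u)
  have hR_le : ∀ u, |R u| ≤ C * (u ^ 2 * |K u|) := fun u => by
    by_cases hu : K u = 0
    · simp [R, hu]
    · calc |R u| = |K u| * |φ u - a - b * u| := abs_mul _ _
        _ ≤ |K u| * (C * u ^ 2) := mul_le_mul_of_nonneg_left (hrem u hu) (abs_nonneg _)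
        _ = C * (u ^ 2 * |K u|) := by ring
  have hR_int : Integrable R :=
    (hK_mom2.const_mul C).mono
      (hK_int.aestronglyMeasurable.mul ((hφ.sub aestronglyMeasurable_const).sub
        (aestronglyMeasurable_id.const_mul b)))
      (Filter.Eventually.of_forall fun u => (hR_le u).trans (le_abs_self _))
  have hbias : (∫ u, K u * φ u) - a = ∫ u, R u := by
    have hsplit : (fun u => K u * φ u) = fun u => R u + a * K u + b * (u * K u) := by
      funext u; simp only [R]; ring
    rw [hsplit, MeasureTheory.integral_add (f := fun u => R u + a * K u)
        (hR_int.add (hK_int.const_mul a)) ((hK_int.id_mul_of_sq_mul_abs hK_mom2).const_mul b),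
      MeasureTheory.integral_add hR_int (hK_int.const_mul a), MeasureTheory.integral_const_mul,
      MeasureTheory.integral_const_mul, hK_norm, hK_mean]
    ring
  rw [hbias, ← MeasureTheory.integral_const_mul]
  exact abs_integral_le_integral_abs.trans
    (integral_mono hR_int.abs (hK_mom2.const_mul C) hR_le)

theorem local_generalized_curvature_bias_bound_general
    (K f f' g : ℝ → ℝ) (A : ℝ)
    (hK_int : Integrable K)
    (hK_norm : ∫ u, K u = 1)
    (hK_mean : ∫ u, u * K u = 0)
    (hK_mom2 : Integrable (fun u => u ^ 2 * |K u|))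
    (hK_supp : Function.support K ⊆ Set.Icc (-A) A)
    (hderiv : ∀ x : ℝ, HasDerivAt f (f' x) x)
    (hrep : ∀ x y : ℝ, f' y - f' x = ∫ t in x..y, g t)
    (x h M : ℝ) (hh : 0 < h)
    (hloc : ∀ᵐ y ∂volume, y ∈ Set.Icc (x - A * h) (x + A * h) → |g y| ≤ M) :
    |(∫ u, K u * f (x - h * u)) - f x|
      ≤ (h ^ 2 / 2) * M * ∫ u, u ^ 2 * |K u| := by
  have hf : Continuous f := continuous_iff_continuousAt.2 fun t => (hderiv t).continuousAt
  refine (abs_integral_mul_sub_le_of_moments (b := -(f' x * h)) (C := M / 2 * h ^ 2)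
    hK_int hK_norm hK_mean hK_mom2
    (by fun_prop : Continuous fun u => f (x - h * u)).aestronglyMeasurable fun u hu => ?_).trans_eq
    (by ring)
  obtain ⟨huA, hAu⟩ : u ∈ Icc (-A) A := hK_supp hu
  have hx : x ∈ Icc (x - A * h) (x + A * h) := ⟨by nlinarith, by nlinarith⟩
  have hy : x - h * u ∈ Icc (x - A * h) (x + A * h) := ⟨by nlinarith, by nlinarith⟩
  have htaylor := abs_taylor_remainder_le (fun t _ => hderiv t) fun t ht =>
    abs_sub_le_of_sub_eq_integral hrep hloc hx (ordConnected_Icc.uIcc_subset hx hy ht)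
  calc |f (x - h * u) - f x - -(f' x * h) * u|
      = |f (x - h * u) - f x - f' x * (x - h * u - x)| := by congr 1; ring
    _ ≤ M / 2 * (x - h * u - x) ^ 2 := htaylor
    _ = M / 2 * h ^ 2 * u ^ 2 := by ring

/-- **Bias bound by local generalized curvature**: let `K` be an integrable kernel with
`∫ K = 1`, `∫ u K(u) du = 0`, `∫ u²|K(u)| du < ∞` and support contained in `[-A, A]`, let
`f` be differentiable with `f'` Lipschitz and weak-second-derivative representative `g`,
and suppose `|g(y)| ≤ M` for a.e. `y ∈ [x - A h, x + A h]`. Then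
`|∫ K(u) f(x - h u) du - f x| ≤ (h²/2) M ∫ u² |K(u)| du`. -/
theorem local_generalized_curvature_bias_bound
    (K f f' g : ℝ → ℝ) (L : NNReal) (A : ℝ) (hA : 0 < A)
    (hK_int : Integrable K)
    (hK_norm : ∫ u, K u = 1)
    (hK_mean : ∫ u, u * K u = 0)
    (hK_mom2 : Integrable (fun u => u ^ 2 * |K u|))
    (hK_supp : Function.support K ⊆ Set.Icc (-A) A)
    (hderiv : ∀ x : ℝ, HasDerivAt f (f' x) x)
    (hlip : LipschitzWith L f')
    (hg_meas : Measurable g)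
    (hrep : ∀ x y : ℝ, f' y - f' x = ∫ t in x..y, g t)
    (x h M : ℝ) (hh : 0 < h) (hM : 0 ≤ M)
    (hloc : ∀ᵐ y ∂volume, y ∈ Set.Icc (x - A * h) (x + A * h) → |g y| ≤ M) :
    |(∫ u, K u * f (x - h * u)) - f x|
      ≤ (h ^ 2 / 2) * M * ∫ u, u ^ 2 * |K u| :=
  local_generalized_curvature_bias_bound_general K f f' g A hK_int hK_norm hK_mean hK_mom2 hK_supp
    hderiv hrep x h M hh hloc
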